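/- Let k be a field of characteristic zero and n ≥ 3. Let g be the n-dimensional Lie algebra over k with basis f₁,…,f_n and brackets [f_i,f_j] = 6(j−i)·f_{i+j} whenever 1 ≤ i ≤ j and i+j ≤ n, and [f_i,f_j] = 0 whenever i+j > n. Then the bilinear product defined on the basis by f_i·f_j = 6(j−1)·f_{i+j} if i+j ≤ n and f_i·f_j = 0 if i+j > n is a Novikov structure on g: it satisfies left-symmetry x·(y·z) − (x·y)·z = y·(x·z) − (y·x)·z, the Novikov identity (x·y)·z = (x·z)·y, and x·y − y·x = [x,y] for all x, y, z ∈ g. -/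

import Mathlib

/-!
Index the basis from `0` and extend it by zero beyond `n`: `e a = basisOrZero f a` is
`f_{a+1}`, or `0` if `a ≥ n`. Then `e a · e b = 6b · e (a+b+1)` holds for all `a b : ℕ`, so
`(e a · e b) · e c = 36bc · e (a+b+c+2)` is symmetric in `b, c` (the Novikov identity),
the associator `e a · (e b · e c) - (e a · e b) · e c = 36c(c+1) · e (a+b+c+2)` is
symmetric in `a, b` (left-symmetry), and `e a · e b - e b · e a = 6(b-a) · e (a+b+1)` is
the bracket. All three identities are multilinear, so checking them on the basis suffices.
-/

/-- The bilinear product on the filiform Lie algebra `f_{9/10,n}` (in the basis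
`f₁, …, f_n`) defined on basis vectors by `f_i · f_j = 6(j−1)·f_{i+j}` if `i+j ≤ n`
and `f_i · f_j = 0` if `i+j > n`.  Here `f` is indexed by `Fin n`, so `f ⟨a, _⟩`
is the basis vector `f_{a+1}`. -/
noncomputable def novProd {k g : Type*} [Field k] [LieRing g] [LieAlgebra k g]
    (n : ℕ) (f : Module.Basis (Fin n) k g) : g →ₗ[k] g →ₗ[k] g :=
  f.constr k fun i => f.constr k fun j =>
    if h : (i : ℕ) + (j : ℕ) + 2 ≤ n
    then (6 * ((j : ℕ) : k)) • f ⟨(i : ℕ) + (j : ℕ) + 1, by omega⟩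
    else 0

namespace LinearMap

variable {R M ι : Type*} [CommRing R] [AddCommGroup M] [Module R M]
  (P : M →ₗ[R] M →ₗ[R] M) (b : Module.Basis ι R M)

theorem left_symmetric_of_basis
    (h : ∀ i j l, P (b i) (P (b j) (b l)) - P (P (b i) (b j)) (b l) =
      P (b j) (P (b i) (b l)) - P (P (b j) (b i)) (b l))
    (x y z : M) : P x (P y z) - P (P x y) z = P y (P x z) - P (P y x) z := by
  let associator : M →ₗ[R] M →ₗ[R] M →ₗ[R] M :=
    ((llcomp R M M M).comp P).compl₂ P - P.compr₂ P
  have : associator = associator.flip := b.ext fun i => ext_basis b b (h i)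
  exact congr($this x y z)

theorem right_comm_of_basis
    (h : ∀ i j l, P (P (b i) (b j)) (b l) = P (P (b i) (b l)) (b j))
    (x y z : M) : P (P x y) z = P (P x z) y := by
  have : P.compr₂ P = lflip.comp (P.compr₂ P) := b.ext fun i => ext_basis b b (h i)
  exact congr($this x y z)

theorem sub_flip_eq_lie_of_basis {L : Type*} [LieRing L] [LieAlgebra R L]
    (P : L →ₗ[R] L →ₗ[R] L) (b : Module.Basis ι R L)
    (h : ∀ i j, P (b i) (b j) - P (b j) (b i) = ⁅b i, b j⁆)
    (x y : L) : P x y - P y x = ⁅x, y⁆ := by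
  have : P - P.flip = mk₂ R (⁅·, ·⁆) add_lie smul_lie lie_add lie_smul := ext_basis b b h
  exact congr($this x y)

end LinearMap

section Filiform

variable {k g : Type*} [Field k] [LieRing g] [LieAlgebra k g]
  {n : ℕ} (f : Module.Basis (Fin n) k g)

noncomputable def basisOrZero (m : ℕ) : g :=
  if h : m < n then f ⟨m, h⟩ else 0

theorem basisOrZero_coe (i : Fin n) : basisOrZero f i = f i := by
  simp [basisOrZero]

theorem basisOrZero_of_le {m : ℕ} (h : n ≤ m) : basisOrZero f m = 0 := by
  simp [basisOrZero, not_lt.2 h]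

theorem dite_smul_eq_smul_basisOrZero (m : ℕ) (c : k) :
    (if h : m + 2 ≤ n then c • f ⟨m + 1, by omega⟩ else 0) = c • basisOrZero f (m + 1) := by
  by_cases h : m + 2 ≤ n
  · rw [dif_pos h, basisOrZero, dif_pos (by omega)]
  · rw [dif_neg h, basisOrZero_of_le f (by omega), smul_zero]

theorem novProd_basisOrZero (a b : ℕ) :
    novProd n f (basisOrZero f a) (basisOrZero f b) =
      (6 * b : k) • basisOrZero f (a + b + 1) := by
  by_cases ha : a < n
  · by_cases hb : b < n
    · rw [basisOrZero, dif_pos ha, basisOrZero, dif_pos hb, novProd,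
        Module.Basis.constr_basis, Module.Basis.constr_basis]
      exact dite_smul_eq_smul_basisOrZero f (a + b) _
    · rw [basisOrZero_of_le f (not_lt.1 hb), basisOrZero_of_le f (m := a + b + 1) (by omega),
        map_zero, smul_zero]
  · rw [basisOrZero_of_le f (not_lt.1 ha), basisOrZero_of_le f (m := a + b + 1) (by omega),
      map_zero, LinearMap.zero_apply, smul_zero]

theorem novProd_basisOrZero_novProd (a b c : ℕ) :
    novProd n f (basisOrZero f a) (novProd n f (basisOrZero f b) (basisOrZero f c)) =
      (36 * c * (b + c + 1) : k) • basisOrZero f (a + b + c + 2) := by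
  rw [novProd_basisOrZero, map_smul, novProd_basisOrZero, smul_smul,
    show a + (b + c + 1) + 1 = a + b + c + 2 by ring]
  congr 1
  push_cast
  ring

theorem novProd_novProd_basisOrZero (a b c : ℕ) :
    novProd n f (novProd n f (basisOrZero f a) (basisOrZero f b)) (basisOrZero f c) =
      (36 * b * c : k) • basisOrZero f (a + b + c + 2) := by
  rw [novProd_basisOrZero, map_smul, LinearMap.smul_apply, novProd_basisOrZero, smul_smul,
    show a + b + 1 + c + 1 = a + b + c + 2 by ring]
  congr 1
  ring

end Filiform

/-- Let `k` be a field of characteristic zero, `n ≥ 3`, and let `g`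
be the `n`-dimensional Lie algebra with basis `f₁, …, f_n` and brackets
`[f_i, f_j] = 6(j−i)·f_{i+j}` for `i+j ≤ n` and `[f_i, f_j] = 0` for `i+j > n`.
Then the bilinear product determined by `f_i · f_j = 6(j−1)·f_{i+j}` (zero if
`i+j > n`) is a Novikov structure on `g`: it is left-symmetric, satisfies the
Novikov identity, and its commutator is the Lie bracket. -/
theorem filiform_novikov_structure
    {k g : Type*} [Field k] [LieRing g] [LieAlgebra k g]
    (n : ℕ) (f : Module.Basis (Fin n) k g)
    (hbr : ∀ i j : Fin n, ⁅f i, f j⁆ =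
      if h : (i : ℕ) + (j : ℕ) + 2 ≤ n
      then (6 * ((j : ℕ) : k) - 6 * ((i : ℕ) : k)) • f ⟨(i : ℕ) + (j : ℕ) + 1, by omega⟩
      else 0) :
    (∀ x y z : g, novProd n f x (novProd n f y z) - novProd n f (novProd n f x y) z
        = novProd n f y (novProd n f x z) - novProd n f (novProd n f y x) z) ∧
    (∀ x y z : g, novProd n f (novProd n f x y) z = novProd n f (novProd n f x z) y) ∧
    (∀ x y : g, novProd n f x y - novProd n f y x = ⁅x, y⁆) := by
  refine ⟨(novProd n f).left_symmetric_of_basis f ?_, (novProd n f).right_comm_of_basis f ?_,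
    (novProd n f).sub_flip_eq_lie_of_basis f ?_⟩
  · intro i j l
    simp only [← basisOrZero_coe f, novProd_basisOrZero_novProd, novProd_novProd_basisOrZero,
      ← sub_smul, add_comm (j : ℕ) i]
    congr 1
    ring
  · intro i j l
    simp only [← basisOrZero_coe f, novProd_novProd_basisOrZero, add_right_comm _ (j : ℕ) l,
      mul_right_comm _ ((j : ℕ) : k)]
  · intro i j
    rw [hbr, dite_smul_eq_smul_basisOrZero, ← basisOrZero_coe f i, ← basisOrZero_coe f j,
      novProd_basisOrZero, novProd_basisOrZero, add_comm (j : ℕ) i, ← sub_smul]
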